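/- Assume every C_i and C'_i is Clifford. Then W(P⃗) = W'(P⃗_σ) holds for all P⃗ ∈ 𝒫^m if and only if both of the following hold simultaneously: (a) for every pair (i,j) with σ(j) = i and every P ∈ 𝒫, V_i(P) = V'_j(P); and (b) for every inversion pair of σ, i.e., every pair of indices r < r' with σ^{-1}(r) > σ^{-1}(r'), and every P, P' ∈ 𝒫, the operators commute: V_r(P) V_{r'}(P') = V_{r'}(P') V_r(P). -/

import Mathlib

/-!
Taking `P⃗` to be the identity away from one position `i` isolates one factor on each side,
`W(P⃗) = V_i(P)` and `W'(P⃗_σ) = V'_{σ⁻¹ i}(P)`, which gives (a). Taking it to be the identity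
away from two positions `r < r'` of an inversion pair leaves `V_{r'}(P') V_r(P)` on one side and,
by (a), `V_r(P) V_{r'}(P')` on the other, which gives (b). Conversely, by (a) `W'(P⃗_σ)` is the
product of the factors `V_i(P_i)` of `W(P⃗)` taken in the order prescribed by `σ`, and insertion
sort restores the order of `W(P⃗)` by swapping only inversion pairs, whose factors commute by (b).
-/

open Matrix Complex

noncomputable section

namespace QEC

/-- The space of `n`-qubit operators: `2^n × 2^n` complex matrices, with the
index set realized as `Fin n → Fin 2`. -/
abbrev QMat (n : ℕ) := Matrix (Fin n → Fin 2) (Fin n → Fin 2) ℂ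

/-- The Pauli `X` matrix. -/
def PX : Matrix (Fin 2) (Fin 2) ℂ := !![0, 1; 1, 0]

/-- The Pauli `Y` matrix. -/
def PY : Matrix (Fin 2) (Fin 2) ℂ := !![0, -Complex.I; Complex.I, 0]

/-- The Pauli `Z` matrix. -/
def PZ : Matrix (Fin 2) (Fin 2) ℂ := !![1, 0; 0, -1]

/-- The four single-qubit Pauli matrices `𝒫 = {I, X, Y, Z}`, indexed by `Fin 4`. -/
def pauli : Fin 4 → Matrix (Fin 2) (Fin 2) ℂ := ![1, PX, PY, PZ]

/-- `A^{(k)} = I^{⊗(k-1)} ⊗ A ⊗ I^{⊗(n-k)}`: the single-qubit operator `A`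
acting on the `k`-th qubit of an `n`-qubit system. -/
def embed {n : ℕ} (k : Fin n) (A : Matrix (Fin 2) (Fin 2) ℂ) : QMat n :=
  fun x y => A (x k) (y k) * ∏ q ∈ Finset.univ.erase k, (if x q = y q then (1 : ℂ) else 0)

/-- The Kronecker product `P 0 ⊗ P 1 ⊗ ⋯ ⊗ P (n-1)` of `n` single-qubit operators. -/
def kron {n : ℕ} (P : Fin n → Matrix (Fin 2) (Fin 2) ℂ) : QMat n :=
  fun x y => ∏ q, P q (x q) (y q)

/-- The circuit `F(A⃗) = C_m A_m^{(k_m)} C_{m-1} ⋯ C_1 A_1^{(k_1)} C_0`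
(here the layers are indexed by `Fin m`, with `i : Fin m` standing for layer `i+1`). -/
def circuit {n m : ℕ} (C : Fin (m + 1) → QMat n) (k : Fin m → Fin n)
    (A : Fin m → Matrix (Fin 2) (Fin 2) ℂ) : QMat n :=
  ((List.ofFn fun i : Fin m => C i.succ * embed (k i) (A i)).reverse).prod * C 0

/-- The cumulative product `C_{m:i} = C_m C_{m-1} ⋯ C_i`. -/
def Ccum {n m : ℕ} (C : Fin (m + 1) → QMat n) (i : Fin (m + 1)) : QMat n :=
  (((List.ofFn C).reverse).take (m + 1 - (i : ℕ))).prod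

/-- `V_i(P) = C_{m:i} P^{(k_i)} C_{m:i}^†` (with `i : Fin m` standing for layer `i+1`). -/
def Vop {n m : ℕ} (C : Fin (m + 1) → QMat n) (k : Fin m → Fin n) (i : Fin m)
    (P : Matrix (Fin 2) (Fin 2) ℂ) : QMat n :=
  Ccum C i.succ * embed (k i) P * (Ccum C i.succ)ᴴ

/-- `W(P⃗) = V_m(P_m) V_{m-1}(P_{m-1}) ⋯ V_1(P_1)`. -/
def Wop {n m : ℕ} (C : Fin (m + 1) → QMat n) (k : Fin m → Fin n)
    (P : Fin m → Matrix (Fin 2) (Fin 2) ℂ) : QMat n :=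
  ((List.ofFn fun i : Fin m => Vop C k i (P i)).reverse).prod

/-- The global phase `e^{iφ}`. -/
def phase (φ : ℝ) : ℂ := Complex.exp ((φ : ℂ) * Complex.I)

/-- A unitary `C` is Clifford when it maps every Pauli string to a signed Pauli
string under conjugation. -/
def IsClifford {n : ℕ} (C : QMat n) : Prop :=
  ∀ Q : Fin n → Fin 4, ∃ (ε : ℂ) (Q' : Fin n → Fin 4), (ε = 1 ∨ ε = -1) ∧
    C * kron (fun q => pauli (Q q)) * Cᴴ = ε • kron (fun q => pauli (Q' q))

end QEC

namespace List

variable {M ι : Type*} [Monoid M]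

theorem prod_map_eq_of_sublist (f : ι → M) {l₀ l : List ι} (hs : l₀ <+ l) (hl : l.Nodup)
    (hf : ∀ j ∈ l, j ∉ l₀ → f j = 1) : (l.map f).prod = (l₀.map f).prod := by
  induction hs with
  | slnil => rfl
  | @cons l₀ l a hs ih =>
    obtain ⟨ha, hl⟩ := nodup_cons.mp hl
    rw [map_cons, prod_cons, hf a mem_cons_self fun h => ha (hs.subset h), one_mul]
    exact ih hl fun j hj => hf j (mem_cons_of_mem _ hj)
  | @cons_cons l₀ l a hs ih =>
    obtain ⟨ha, hl⟩ := nodup_cons.mp hl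
    rw [map_cons, map_cons, prod_cons, prod_cons, ih hl fun j hj hj₀ =>
      hf j (mem_cons_of_mem _ hj) fun hmem => (mem_cons.mp hmem).elim (fun h => ha (h ▸ hj)) hj₀]

theorem prod_map_orderedInsert (r : ι → ι → Prop) [DecidableRel r] (f : ι → M) (a : ι)
    (l : List ι) (h : ∀ b ∈ l, ¬ r a b → Commute (f a) (f b)) :
    ((l.orderedInsert r a).map f).prod = f a * (l.map f).prod := by
  induction l with
  | nil => simp
  | cons b l ih =>
    by_cases hab : r a b
    · simp [orderedInsert, hab]
    · simp only [orderedInsert, hab, if_false, map_cons, prod_cons]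
      rw [ih fun c hc => h c (mem_cons_of_mem _ hc), ← mul_assoc, ← mul_assoc,
        (h b mem_cons_self hab).eq]

theorem prod_map_insertionSort (r : ι → ι → Prop) [DecidableRel r] (f : ι → M) (l : List ι)
    (h : l.Pairwise fun a b => ¬ r a b → Commute (f a) (f b)) :
    ((l.insertionSort r).map f).prod = (l.map f).prod := by
  induction l with
  | nil => rfl
  | cons a l ih =>
    obtain ⟨ha, hl⟩ := pairwise_cons.mp h
    rw [insertionSort_cons, prod_map_orderedInsert r f a _
      fun b hb => ha b ((perm_insertionSort r l).subset hb), ih hl, map_cons, prod_cons]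

/-- Sorting `l'` into `l` by insertion only ever swaps a pair that `l'` lists in increasing
order. -/
theorem prod_map_eq_of_perm_of_sortedGE [LinearOrder ι] (f : ι → M) {l l' : List ι}
    (hp : l' ~ l) (hl : l.SortedGE) (h : l'.Pairwise fun a b => a < b → Commute (f a) (f b)) :
    (l'.map f).prod = (l.map f).prod := by
  have hsort : l'.insertionSort (· ≥ ·) = l :=
    ((perm_insertionSort _ l').trans hp).eq_of_sortedGE sortedGE_insertionSort hl
  rw [← prod_map_insertionSort (· ≥ ·) f l' (h.imp fun hc hab => hc (lt_of_not_ge hab)), hsort]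

variable {m : ℕ}

theorem prod_ofFn_reverse_eq_of_eq_one (f : Fin m → M) {a : Fin m}
    (hf : ∀ i, i ≠ a → f i = 1) : (ofFn f).reverse.prod = f a := by
  rw [ofFn_eq_map, ← map_reverse, prod_map_eq_of_sublist f (l₀ := [a])
    (singleton_sublist.mpr (by simp)) (nodup_reverse.mpr (nodup_finRange m))
    fun i _ hi => hf i (by simpa using hi)]
  simp

theorem prod_ofFn_reverse_eq_mul_of_eq_one (f : Fin m → M) {a b : Fin m} (hba : b < a)
    (hf : ∀ i, i ≠ a → i ≠ b → f i = 1) : (ofFn f).reverse.prod = f a * f b := by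
  have hsorted : (finRange m).reverse.SortedGE := (sortedLT_finRange m).reverse.sortedGE
  have hsub : [a, b] <+ (finRange m).reverse :=
    sublist_of_subperm_of_sortedGE
      (subperm_of_subset (by simp [hba.ne']) (by simp [List.subset_def]))
      (pairwise_pair.mpr (show a ≥ b from hba.le)).sortedGE hsorted
  rw [ofFn_eq_map, ← map_reverse, prod_map_eq_of_sublist f hsub
    (nodup_reverse.mpr (nodup_finRange m)) fun i _ hi => hf i (by simp_all) (by simp_all)]
  simp

theorem prod_ofFn_comp_perm_reverse (f : Fin m → M) (σ : Equiv.Perm (Fin m))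
    (h : ∀ a b, a < b → σ.symm b < σ.symm a → Commute (f a) (f b)) :
    (ofFn (f ∘ σ)).reverse.prod = (ofFn f).reverse.prod := by
  rw [ofFn_eq_map, ofFn_eq_map, ← map_reverse, ← map_reverse, ← map_map]
  refine prod_map_eq_of_perm_of_sortedGE f ?_ (sortedLT_finRange m).reverse.sortedGE ?_
  · rw [map_reverse]
    exact ((reverse_perm _).trans σ.map_finRange_perm).trans (reverse_perm _).symm
  · refine pairwise_map.mpr ((pairwise_reverse.mpr (pairwise_lt_finRange m)).imp ?_)
    intro a b hba hab
    exact h (σ a) (σ b) hab (by simpa using hba)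

end List

namespace QEC

open List

section OrderedProducts

variable {M Q : Type*} [Monoid M] {m : ℕ}

theorem prod_ofFn_reverse_eq_comp_perm_iff (V V' : Fin m → Q → M) {q₀ : Q}
    (hV : ∀ i, V i q₀ = 1) (hV' : ∀ j, V' j q₀ = 1) (σ : Equiv.Perm (Fin m)) :
    (∀ p : Fin m → Q, (ofFn fun i => V i (p i)).reverse.prod =
        (ofFn fun j => V' j (p (σ j))).reverse.prod) ↔
      (∀ i j, σ j = i → ∀ q, V i q = V' j q) ∧
        ∀ r r', r < r' → σ.symm r' < σ.symm r → ∀ q q', Commute (V r q) (V r' q') := by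
  classical
  constructor
  · intro hW
    have ha : ∀ i j, σ j = i → ∀ q, V i q = V' j q := by
      rintro _ j rfl q
      have h := hW (Function.update (fun _ => q₀) (σ j) q)
      rw [prod_ofFn_reverse_eq_of_eq_one _ (a := σ j) fun i hi => by simp [hi, hV],
        prod_ofFn_reverse_eq_of_eq_one _ (a := j) fun i hi => by simp [σ.injective.ne hi, hV']] at h
      simpa using h
    refine ⟨ha, fun r r' hr hinv q q' => ?_⟩
    have h := hW (Function.update (Function.update (fun _ => q₀) r q) r' q')
    rw [prod_ofFn_reverse_eq_mul_of_eq_one _ hr fun i h₁ h₂ => by simp [h₁, h₂, hV],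
      prod_ofFn_reverse_eq_mul_of_eq_one _ hinv fun i h₁ h₂ => by
        simp [← Equiv.eq_symm_apply, h₁, h₂, hV']] at h
    simpa [Commute, SemiconjBy, hr.ne, ← ha _ _ (σ.apply_symm_apply _)] using h.symm
  · rintro ⟨ha, hb⟩ p
    simp_rw [← ha _ _ rfl]
    exact (prod_ofFn_comp_perm_reverse (fun i => V i (p i)) σ
      fun a b hab hinv => hb a b hab hinv _ _).symm

end OrderedProducts

theorem embed_one {n : ℕ} (k : Fin n) : embed k (1 : Matrix (Fin 2) (Fin 2) ℂ) = 1 := by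
  ext x y
  by_cases hxy : x = y
  · subst hxy
    simp [embed]
  · obtain ⟨q, hq⟩ := Function.ne_iff.mp hxy
    rw [embed, one_apply_ne hxy]
    rcases eq_or_ne q k with rfl | hqk
    · simp [hq]
    · exact mul_eq_zero_of_right _ <|
        Finset.prod_eq_zero (Finset.mem_erase.mpr ⟨hqk, Finset.mem_univ q⟩) (by simp [hq])

theorem Ccum_mem_unitaryGroup {n m : ℕ} {C : Fin (m + 1) → QMat n}
    (hC : ∀ i, C i ∈ unitaryGroup (Fin n → Fin 2) ℂ) (i : Fin (m + 1)) :
    Ccum C i ∈ unitaryGroup (Fin n → Fin 2) ℂ :=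
  Submonoid.list_prod_mem _ fun _ hx => by
    obtain ⟨j, rfl⟩ := mem_ofFn.mp (mem_reverse.mp (mem_of_mem_take hx))
    exact hC j

theorem Vop_one {n m : ℕ} {C : Fin (m + 1) → QMat n}
    (hC : ∀ i, C i ∈ unitaryGroup (Fin n → Fin 2) ℂ) (k : Fin m → Fin n) (i : Fin m) :
    Vop C k i 1 = 1 := by
  rw [Vop, embed_one, mul_one, ← star_eq_conjTranspose]
  exact mem_unitaryGroup_iff.mp (Ccum_mem_unitaryGroup hC i.succ)

theorem stmt12_general (n m : ℕ) (C C' : Fin (m + 1) → QMat n)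
    (hC : ∀ i, C i ∈ Matrix.unitaryGroup (Fin n → Fin 2) ℂ)
    (hC' : ∀ i, C' i ∈ Matrix.unitaryGroup (Fin n → Fin 2) ℂ)
    (k l : Fin m → Fin n) (σ : Equiv.Perm (Fin m)) :
    (∀ p : Fin m → Fin 4,
        Wop C k (fun i => pauli (p i)) = Wop C' l (fun i => pauli (p (σ i)))) ↔
    ((∀ i j : Fin m, σ j = i → ∀ q : Fin 4, Vop C k i (pauli q) = Vop C' l j (pauli q)) ∧
      (∀ r r' : Fin m, r < r' → σ.symm r' < σ.symm r → ∀ q q' : Fin 4,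
        Vop C k r (pauli q) * Vop C k r' (pauli q') =
          Vop C k r' (pauli q') * Vop C k r (pauli q))) :=
  prod_ofFn_reverse_eq_comp_perm_iff (fun i q => Vop C k i (pauli q))
    (fun j q => Vop C' l j (pauli q)) (q₀ := 0) (Vop_one hC k) (Vop_one hC' l) σ

/-- Assuming all layers are Clifford, `W(P⃗) = W'(P⃗_σ)` for all `P⃗ ∈ 𝒫^m`
iff (a) `V_i(P) = V'_j(P)` for all corresponding pairs `σ(j) = i` and all `P ∈ 𝒫`, and
(b) for every inversion pair `r < r'` with `σ⁻¹(r) > σ⁻¹(r')` and all `P, P' ∈ 𝒫`,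
`V_r(P)` and `V_{r'}(P')` commute. -/
theorem stmt12 (n m : ℕ) (hn : 1 ≤ n) (hm : 1 ≤ m)
    (C C' : Fin (m + 1) → QMat n)
    (hC : ∀ i, C i ∈ Matrix.unitaryGroup (Fin n → Fin 2) ℂ)
    (hC' : ∀ i, C' i ∈ Matrix.unitaryGroup (Fin n → Fin 2) ℂ)
    (hCc : ∀ i, IsClifford (C i)) (hCc' : ∀ i, IsClifford (C' i))
    (k l : Fin m → Fin n) (σ : Equiv.Perm (Fin m)) :
    (∀ p : Fin m → Fin 4,
        Wop C k (fun i => pauli (p i)) = Wop C' l (fun i => pauli (p (σ i)))) ↔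
    ((∀ i j : Fin m, σ j = i → ∀ q : Fin 4, Vop C k i (pauli q) = Vop C' l j (pauli q)) ∧
      (∀ r r' : Fin m, r < r' → σ.symm r' < σ.symm r → ∀ q q' : Fin 4,
        Vop C k r (pauli q) * Vop C k r' (pauli q') =
          Vop C k r' (pauli q') * Vop C k r (pauli q))) :=
  stmt12_general n m C C' hC hC' k l σ

end QEC
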